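/- arXiv:2603.18450 — 4 statements merged into one kernel-verified Lean document; each statement's English description precedes it below -/
import Mathlib

section
/- Let φ : ℝ≥0 × ℝ^n → ℝ^n be a semiflow (φ(0,x) = x and φ(τ+ϑ,x) = φ(τ,φ(ϑ,x)) for all τ,ϑ ≥ 0). Let C_B and C_S be subsets of ℝ^n such that C_B ⊆ C_S and C_B is invariant under φ (x ∈ C_B implies φ(τ,x) ∈ C_B for all τ ≥ 0). Fix T > 0 and define C_I* = {x : φ(τ,x) ∈ C_S for all τ ∈ [0,T], and φ(T,x) ∈ C_B}. Then x ∈ C_I* implies φ(τ,x) ∈ C_I* for all τ ≥ 0; that is, C_I* is invariant under φ. -/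
/-!
Flowing `x ∈ C_I*` for time `τ` just shifts its trajectory: the part up to time `T - τ` is the
old safe segment, and after time `T` the trajectory lies in the invariant backup set `C_B ⊆ C_S`.
So `φ(τ, x)` stays safe forever, and `φ(T, φ(τ, x)) = φ(τ, φ(T, x)) ∈ C_B`.
-/

open Set

section Semiflow

variable {α : Type*} {φ : ℝ → α → α}
  (hsemi : ∀ τ ϑ : ℝ, 0 ≤ τ → 0 ≤ ϑ → ∀ x, φ (τ + ϑ) x = φ τ (φ ϑ x))
include hsemi

theorem semiflow_comm {s t : ℝ} (hs : 0 ≤ s) (ht : 0 ≤ t) (x : α) :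
    φ s (φ t x) = φ t (φ s x) := by
  rw [← hsemi s t hs ht, add_comm, hsemi t s ht hs]

theorem semiflow_mem_of_forall_Icc_of_mem_backup {B S : Set α} (hBS : B ⊆ S)
    (hB : IsForwardInvariant φ B) {T : ℝ} (hT : 0 ≤ T) {x : α}
    (hxS : ∀ τ ∈ Icc 0 T, φ τ x ∈ S) (hxB : φ T x ∈ B) {t : ℝ} (ht : 0 ≤ t) :
    φ t x ∈ S := by
  rcases le_or_gt t T with htT | hTt
  · exact hxS t ⟨ht, htT⟩
  · have hshift : φ t x = φ (t - T) (φ T x) := by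
      rw [← hsemi _ _ (sub_nonneg.2 hTt.le) hT, sub_add_cancel]
    rw [hshift]
    exact hBS (hB (sub_nonneg.2 hTt.le) hxB)

theorem isForwardInvariant_backupReach {B S : Set α} (hBS : B ⊆ S)
    (hB : IsForwardInvariant φ B) {T : ℝ} (hT : 0 ≤ T) :
    IsForwardInvariant φ {x | (∀ τ ∈ Icc 0 T, φ τ x ∈ S) ∧ φ T x ∈ B} := by
  rintro τ hτ x ⟨hxS, hxB⟩
  refine ⟨fun σ hσ => ?_, ?_⟩
  · rw [← hsemi σ τ hσ.1 hτ]
    exact semiflow_mem_of_forall_Icc_of_mem_backup hsemi hBS hB hT hxS hxB (add_nonneg hσ.1 hτ)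
  · rw [semiflow_comm hsemi hT hτ]
    exact hB hτ hxB

end Semiflow

theorem CIstar_invariant_general {n : ℕ}
    (φ : ℝ → (Fin n → ℝ) → (Fin n → ℝ))
    (hsemi : ∀ τ ϑ : ℝ, 0 ≤ τ → 0 ≤ ϑ → ∀ x, φ (τ + ϑ) x = φ τ (φ ϑ x))
    (CB CS : Set (Fin n → ℝ)) (hBS : CB ⊆ CS)
    (hInv : ∀ x ∈ CB, ∀ τ : ℝ, 0 ≤ τ → φ τ x ∈ CB)
    (T : ℝ) (hT : 0 < T)
    (CIstar : Set (Fin n → ℝ))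
    (hCI : CIstar = {x | (∀ τ ∈ Set.Icc (0 : ℝ) T, φ τ x ∈ CS) ∧ φ T x ∈ CB}) :
    ∀ x ∈ CIstar, ∀ τ : ℝ, 0 ≤ τ → φ τ x ∈ CIstar := by
  have hB : IsForwardInvariant φ CB := fun τ hτ x hx => hInv x hx τ hτ
  subst hCI
  exact fun x hx τ hτ => isForwardInvariant_backupReach hsemi hBS hB hT.le hτ hx

/-- The expanded implicit safe set `C_I*` is invariant under the semiflow. -/
theorem CIstar_invariant {n : ℕ}
    (φ : ℝ → (Fin n → ℝ) → (Fin n → ℝ))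
    (h0 : ∀ x, φ 0 x = x)
    (hsemi : ∀ τ ϑ : ℝ, 0 ≤ τ → 0 ≤ ϑ → ∀ x, φ (τ + ϑ) x = φ τ (φ ϑ x))
    (CB CS : Set (Fin n → ℝ)) (hBS : CB ⊆ CS)
    (hInv : ∀ x ∈ CB, ∀ τ : ℝ, 0 ≤ τ → φ τ x ∈ CB)
    (T : ℝ) (hT : 0 < T)
    (CIstar : Set (Fin n → ℝ))
    (hCI : CIstar = {x | (∀ τ ∈ Set.Icc (0 : ℝ) T, φ τ x ∈ CS) ∧ φ T x ∈ CB}) :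
    ∀ x ∈ CIstar, ∀ τ : ℝ, 0 ≤ τ → φ τ x ∈ CIstar :=
  CIstar_invariant_general φ hsemi CB CS hBS hInv T hT CIstar hCI
end

section
/- If x ∈ C_I* then φ(τ, φ(ϑ, x)) ∈ C_S for all τ ∈ [0,T] and all ϑ ≥ 0. -/
section Semiflow

variable {α : Type*} {φ : ℝ → α → α}

theorem semiflow_mem_of_le_of_invariant
    (hsemi : ∀ τ ϑ : ℝ, 0 ≤ τ → 0 ≤ ϑ → ∀ x, φ (τ + ϑ) x = φ τ (φ ϑ x)) {CB : Set α}
    (hInv : ∀ x ∈ CB, ∀ τ : ℝ, 0 ≤ τ → φ τ x ∈ CB)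
    {T t : ℝ} (hT : 0 ≤ T) (hTt : T ≤ t) {x : α} (hx : φ T x ∈ CB) : φ t x ∈ CB := by
  have hshift : φ t x = φ (t - T) (φ T x) := by
    rw [← hsemi _ T (sub_nonneg.mpr hTt) hT, sub_add_cancel]
  exact hshift ▸ hInv _ hx _ (sub_nonneg.mpr hTt)

theorem semiflow_mem_safe_forever
    (hsemi : ∀ τ ϑ : ℝ, 0 ≤ τ → 0 ≤ ϑ → ∀ x, φ (τ + ϑ) x = φ τ (φ ϑ x))
    {CB CS : Set α} (hBS : CB ⊆ CS)
    (hInv : ∀ x ∈ CB, ∀ τ : ℝ, 0 ≤ τ → φ τ x ∈ CB)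
    {T : ℝ} (hT : 0 ≤ T) {x : α}
    (hS : ∀ τ ∈ Set.Icc (0 : ℝ) T, φ τ x ∈ CS) (hB : φ T x ∈ CB) :
    ∀ t, 0 ≤ t → φ t x ∈ CS := by
  intro t ht
  rcases le_total t T with htT | hTt
  · exact hS t ⟨ht, htT⟩
  · exact hBS (semiflow_mem_of_le_of_invariant hsemi hInv hT hTt hB)

end Semiflow

theorem CIstar_shifted_safe_general {n : ℕ}
    (φ : ℝ → (Fin n → ℝ) → (Fin n → ℝ))
    (hsemi : ∀ τ ϑ : ℝ, 0 ≤ τ → 0 ≤ ϑ → ∀ x, φ (τ + ϑ) x = φ τ (φ ϑ x))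
    (CB CS : Set (Fin n → ℝ)) (hBS : CB ⊆ CS)
    (hInv : ∀ x ∈ CB, ∀ τ : ℝ, 0 ≤ τ → φ τ x ∈ CB)
    (T : ℝ)
    (CIstar : Set (Fin n → ℝ))
    (hCI : CIstar = {x | (∀ τ ∈ Set.Icc (0 : ℝ) T, φ τ x ∈ CS) ∧ φ T x ∈ CB}) :
    ∀ x ∈ CIstar, ∀ τ ∈ Set.Icc (0 : ℝ) T, ∀ ϑ : ℝ, 0 ≤ ϑ → φ τ (φ ϑ x) ∈ CS := by
  rintro x hx τ ⟨hτ0, hτT⟩ ϑ hϑ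
  rw [hCI] at hx
  obtain ⟨hS, hB⟩ := hx
  rw [← hsemi τ ϑ hτ0 hϑ]
  exact semiflow_mem_safe_forever hsemi hBS hInv (hτ0.trans hτT) hS hB _ (add_nonneg hτ0 hϑ)

/-- Key intermediate step: `φ(τ, φ(ϑ, x)) ∈ C_S` for all `τ ∈ [0,T]` and `ϑ ≥ 0`. -/
theorem CIstar_shifted_safe {n : ℕ}
    (φ : ℝ → (Fin n → ℝ) → (Fin n → ℝ))
    (h0 : ∀ x, φ 0 x = x)
    (hsemi : ∀ τ ϑ : ℝ, 0 ≤ τ → 0 ≤ ϑ → ∀ x, φ (τ + ϑ) x = φ τ (φ ϑ x))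
    (CB CS : Set (Fin n → ℝ)) (hBS : CB ⊆ CS)
    (hInv : ∀ x ∈ CB, ∀ τ : ℝ, 0 ≤ τ → φ τ x ∈ CB)
    (T : ℝ) (hT : 0 < T)
    (CIstar : Set (Fin n → ℝ))
    (hCI : CIstar = {x | (∀ τ ∈ Set.Icc (0 : ℝ) T, φ τ x ∈ CS) ∧ φ T x ∈ CB}) :
    ∀ x ∈ CIstar, ∀ τ ∈ Set.Icc (0 : ℝ) T, ∀ ϑ : ℝ, 0 ≤ ϑ → φ τ (φ ϑ x) ∈ CS :=
  CIstar_shifted_safe_general φ hsemi CB CS hBS hInv T CIstar hCI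
end

section
/- For the augmented semiflow φ̂ on ℝ^n × ℝ^p with augmented backup set Ĉ_B ⊆ Ĉ_S both invariant conditions as before (Ĉ_B ⊆ Ĉ_S, Ĉ_B invariant under φ̂), the augmented expanded set Ĉ_I* = {x̂ : φ̂(τ,x̂) ∈ Ĉ_S for all τ ∈ [0,T], φ̂(T,x̂) ∈ Ĉ_B} is invariant under φ̂. -/
/-!
Along a trajectory starting in `Ĉ_I*`, times in `[0, T]` stay in `Ĉ_S` by definition, and later
times pass through `φ̂(T, x̂) ∈ Ĉ_B`, after which the trajectory stays in the invariant set
`Ĉ_B ⊆ Ĉ_S`. Hence the whole forward trajectory lies in `Ĉ_S`; shifting by `t ≥ 0` then keeps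
both defining conditions of `Ĉ_I*`, the backup condition because `φ̂(T, φ̂(t, x̂)) = φ̂(t, φ̂(T, x̂))`.
-/

open Set

section Semiflow

variable {α : Type*} {φ : ℝ → α → α} {S B : Set α} {T : ℝ}

/-- The paper's `Ĉ_I*`, for safe set `S`, backup set `B` and horizon `T`. -/
def expandedSafeSet (φ : ℝ → α → α) (S B : Set α) (T : ℝ) : Set α :=
  {x | (∀ τ ∈ Icc 0 T, φ τ x ∈ S) ∧ φ T x ∈ B}

lemma mem_of_mem_expandedSafeSet
    (hsemi : ∀ τ ϑ : ℝ, 0 ≤ τ → 0 ≤ ϑ → ∀ x, φ (τ + ϑ) x = φ τ (φ ϑ x))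
    (hBS : B ⊆ S) (hB : IsForwardInvariant φ B) (hT : 0 ≤ T)
    {x : α} (hx : x ∈ expandedSafeSet φ S B T) {t : ℝ} (ht : 0 ≤ t) : φ t x ∈ S := by
  obtain ⟨hxS, hxB⟩ := hx
  rcases le_total t T with htT | hTt
  · exact hxS t ⟨ht, htT⟩
  · have hsplit : φ t x = φ (t - T) (φ T x) := by
      rw [← hsemi _ _ (sub_nonneg.2 hTt) hT, sub_add_cancel]
    exact hsplit ▸ hBS (hB (sub_nonneg.2 hTt) hxB)

theorem isForwardInvariant_expandedSafeSet
    (hsemi : ∀ τ ϑ : ℝ, 0 ≤ τ → 0 ≤ ϑ → ∀ x, φ (τ + ϑ) x = φ τ (φ ϑ x))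
    (hBS : B ⊆ S) (hB : IsForwardInvariant φ B) (hT : 0 ≤ T) :
    IsForwardInvariant φ (expandedSafeSet φ S B T) := by
  intro t ht x hx
  refine ⟨fun τ hτ => ?_, ?_⟩
  · rw [← hsemi τ t hτ.1 ht]
    exact mem_of_mem_expandedSafeSet hsemi hBS hB hT hx (add_nonneg hτ.1 ht)
  · rw [← hsemi T t hT ht, add_comm, hsemi t T ht hT]
    exact hB ht hx.2

end Semiflow

theorem augmented_CIstar_invariant_general {n p : ℕ}
    (φ : ℝ → ((Fin n → ℝ) × (Fin p → ℝ)) → ((Fin n → ℝ) × (Fin p → ℝ)))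
    (hsemi : ∀ τ ϑ : ℝ, 0 ≤ τ → 0 ≤ ϑ → ∀ x, φ (τ + ϑ) x = φ τ (φ ϑ x))
    (CS CB : Set ((Fin n → ℝ) × (Fin p → ℝ)))
    (hBS : CB ⊆ CS)
    (hInv : ∀ x ∈ CB, ∀ τ : ℝ, 0 ≤ τ → φ τ x ∈ CB)
    (T : ℝ) (hT : 0 < T)
    (CIstar : Set ((Fin n → ℝ) × (Fin p → ℝ)))
    (hCI : CIstar = {x | (∀ τ ∈ Set.Icc (0 : ℝ) T, φ τ x ∈ CS) ∧ φ T x ∈ CB}) :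
    ∀ x ∈ CIstar, ∀ τ : ℝ, 0 ≤ τ → φ τ x ∈ CIstar := by
  have hB : IsForwardInvariant φ CB := fun τ hτ x hx => hInv x hx τ hτ
  subst hCI
  exact fun x hx τ hτ => isForwardInvariant_expandedSafeSet hsemi hBS hB hT.le hτ hx

/-- The augmented expanded set `Ĉ_I*` is invariant under the augmented semiflow. -/
theorem augmented_CIstar_invariant {n p : ℕ}
    (φ : ℝ → ((Fin n → ℝ) × (Fin p → ℝ)) → ((Fin n → ℝ) × (Fin p → ℝ)))
    (h0 : ∀ x, φ 0 x = x)
    (hsemi : ∀ τ ϑ : ℝ, 0 ≤ τ → 0 ≤ ϑ → ∀ x, φ (τ + ϑ) x = φ τ (φ ϑ x))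
    (h hb : (Fin n → ℝ) → ℝ)
    (CS CB : Set ((Fin n → ℝ) × (Fin p → ℝ)))
    (hCS : CS = {x | 0 ≤ h x.1}) (hCB : CB = {x | 0 ≤ hb x.1})
    (hBS : CB ⊆ CS)
    (hInv : ∀ x ∈ CB, ∀ τ : ℝ, 0 ≤ τ → φ τ x ∈ CB)
    (T : ℝ) (hT : 0 < T)
    (CIstar : Set ((Fin n → ℝ) × (Fin p → ℝ)))
    (hCI : CIstar = {x | (∀ τ ∈ Set.Icc (0 : ℝ) T, φ τ x ∈ CS) ∧ φ T x ∈ CB}) :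
    ∀ x ∈ CIstar, ∀ τ : ℝ, 0 ≤ τ → φ τ x ∈ CIstar :=
  augmented_CIstar_invariant_general φ hsemi CS CB hBS hInv T hT CIstar hCI
end

section
/- Let h : ℝ → ℝ be continuously differentiable along a trajectory, and suppose y : ℝ≥0 → ℝ is differentiable with ẏ(t) ≥ -α(y(t)) for all t ≥ 0, where α : ℝ → ℝ is locally Lipschitz, strictly increasing, and α(0) = 0. If y(0) ≥ 0 then y(t) ≥ 0 for all t ≥ 0. -/
open Set

theorem nonneg_of_deriv_pos_of_neg {y y' : ℝ → ℝ} {a : ℝ}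
    (hy : ∀ t, a ≤ t → HasDerivAt y (y' t) t) (hpos : ∀ t, a ≤ t → y t < 0 → 0 < y' t)
    (ha : 0 ≤ y a) {t : ℝ} (ht : a ≤ t) : 0 ≤ y t := by
  refine le_of_forall_sub_le fun ε hε => ?_
  -- `-y` cannot cross the constant barrier `ε`: at a crossing `y = -ε < 0`, so `-y` decreases.
  have hbarrier : ∀ ⦃u⦄, u ∈ Icc a t → -y u ≤ ε :=
    image_le_of_deriv_right_lt_deriv_boundary
      (fun u hu => (hy u hu.1).continuousAt.continuousWithinAt.neg)
      (fun u hu => (hy u hu.1).neg.hasDerivWithinAt) (by rw [Pi.neg_apply]; linarith)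
      (fun _ => hasDerivAt_const _ ε)
      fun u hu hyu => neg_neg_of_pos (hpos u hu.1 (by rw [Pi.neg_apply] at hyu; linarith))
  linarith [hbarrier ⟨ht, le_rfl⟩]

theorem comparison_nonneg_general
    (α : ℝ → ℝ) (hMono : StrictMono α) (hα0 : α 0 = 0)
    (y : ℝ → ℝ) (y' : ℝ → ℝ)
    (hy : ∀ t : ℝ, 0 ≤ t → HasDerivAt y (y' t) t)
    (hineq : ∀ t : ℝ, 0 ≤ t → y' t ≥ -α (y t))
    (h0 : 0 ≤ y 0) :
    ∀ t : ℝ, 0 ≤ t → 0 ≤ y t := by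
  refine fun t ht => nonneg_of_deriv_pos_of_neg hy (fun u hu hyu => ?_) h0 ht
  have hαneg : α (y u) < 0 := hα0 ▸ hMono hyu
  linarith [hineq u hu]

/-- Scalar comparison lemma: if `ẏ ≥ -α(y)` with `α` locally Lipschitz, strictly increasing
and `α(0) = 0`, then `y(0) ≥ 0` implies `y(t) ≥ 0` for all `t ≥ 0`. -/
theorem comparison_nonneg
    (α : ℝ → ℝ) (hLip : LocallyLipschitz α) (hMono : StrictMono α) (hα0 : α 0 = 0)
    (y : ℝ → ℝ) (y' : ℝ → ℝ)
    (hy : ∀ t : ℝ, 0 ≤ t → HasDerivAt y (y' t) t)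
    (hineq : ∀ t : ℝ, 0 ≤ t → y' t ≥ -α (y t))
    (h0 : 0 ≤ y 0) :
    ∀ t : ℝ, 0 ≤ t → 0 ≤ y t :=
  comparison_nonneg_general α hMono hα0 y y' hy hineq h0
end
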